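/- Let n be a positive integer, h ≥ 1 a real number, κ > 0, and μ a Borel measure on ℝ^n homogeneous of degree h. Let V be a Borel subset of the unit L¹ sphere {x ∈ ℝ^n : ‖x‖₁ = 1} with μ((0,1]·V) < ∞, and let f : ℝ^n → ℝ be a linear functional with |f(x) − f(y)| ≤ K·‖x − y‖₁ for all x, y and f(u) ≥ c for all u ∈ V, where K ≥ 0 and c > 0. Let Γ ⊆ (0,∞)·V be a set such that {x ∈ Γ : f(x) ≤ L} is finite for every L, and let a ≥ 0, C₀ > 0, C₁ ≥ 0 be constants. Assume that for every δ ∈ (0,1] there exists a finite partition {U_i}_{i=1}^N of V into Borel sets with N ≤ C₀·δ^(−h) and diam₁(U_i) ≤ δ for every i, such that for every i and every L ≥ 1, writing m_i := inf_{U_i} f and M_i := sup_{U_i} f, the two-sided estimate a·μ((0,1]·U_i)·(L/M_i)^h − C₁·L^(h−κ) ≤ #{x ∈ Γ ∩ (0,∞)·U_i : f(x) ≤ L} ≤ a·μ((0,1]·U_i)·(L/m_i)^h + C₁·L^(h−κ) holds. Then, setting v := μ({x ∈ (0,∞)·V : f(x) ≤ 1}) and κ' := κ/(h+1), there exists a constant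 C₂ ≥ 0 (depending only on a, h, K, c, μ((0,1]·V), C₀, C₁) such that for every L ≥ 1, |#{x ∈ Γ : f(x) ≤ L} − a·v·L^h| ≤ C₂·L^(h−κ'). -/

import Mathlib

open MeasureTheory Set Pointwise

/-- The `L¹` norm on `ℝ^n`. -/
noncomputable def norm1 {n : ℕ} (x : Fin n → ℝ) : ℝ := ∑ i, |x i|

/-!
Cut `V` into cells `U` of diameter `δ` and let `m ≤ M` be the infimum and supremum of `f` on `U`.
Since `f` is linear, the part of the cone over `U` where `f ≤ L` lies between `(0, L/M]·U` and
`(0, L/m]·U`, so by homogeneity its volume is squeezed between `(L/M)^h` and `(L/m)^h` times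
`μ((0,1]·U)`: the same two bounds as the count, up to the error `C₁ L^(h-κ)`. As `M - m ≤ Kδ` and
`t ↦ t^(-h)` is `h c^(-h-1)`-Lipschitz on `[c, ∞)`, the two bounds differ by `O(δ L^h)` per unit
of volume. Summing over the at most `C₀ δ^(-h)` cells leaves an error `O(δ L^h + δ^(-h) L^(h-κ))`,
and `δ = L^(-κ/(h+1))` balances the two terms.
-/

lemma rpow_neg_sub_rpow_neg_le {h c m M : ℝ} (hh : 0 ≤ h) (hc : 0 < c) (hcm : c ≤ m)
    (hmM : m ≤ M) : m ^ (-h) - M ^ (-h) ≤ h * c ^ (-h - 1) * (M - m) := by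
  have hderiv : ∀ x ∈ Ici c, HasDerivAt (fun t : ℝ => -t ^ (-h)) (h * x ^ (-h - 1)) x := by
    intro x hx
    simpa using (Real.hasDerivAt_rpow_const (p := -h) (Or.inl (hc.trans_le hx).ne')).fun_neg
  have := (convex_Ici c).image_sub_le_mul_sub_of_deriv_le
    (fun x hx => (hderiv x hx).continuousAt.continuousWithinAt)
    (fun x hx => (hderiv x (interior_subset hx)).differentiableAt.differentiableWithinAt)
    (fun x hx => by
      rw [(hderiv x (interior_subset hx)).deriv]
      exact mul_le_mul_of_nonneg_left
        (Real.rpow_le_rpow_of_nonpos hc (interior_subset hx) (by linarith)) hh)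
    m hcm M (hcm.trans hmM) hmM
  linarith

section Oscillation

variable {α : Type*} {g : α → ℝ} {U : Set α} {ε : ℝ}

lemma csSup_image_le_csInf_image_add (hU : U.Nonempty)
    (hg : ∀ x ∈ U, ∀ y ∈ U, g x - g y ≤ ε) : sSup (g '' U) ≤ sInf (g '' U) + ε :=
  csSup_le (hU.image g) <| forall_mem_image.2 fun x hx =>
    sub_le_iff_le_add.1 <| le_csInf (hU.image g) <| forall_mem_image.2 fun y hy =>
      sub_le_comm.1 (hg x hx y hy)

lemma mem_Icc_csInf_image_csSup_image (hg : ∀ x ∈ U, ∀ y ∈ U, g x - g y ≤ ε) {u : α}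
    (hu : u ∈ U) : g u ∈ Icc (sInf (g '' U)) (sSup (g '' U)) :=
  ⟨csInf_le ⟨g u - ε, forall_mem_image.2 fun y hy => sub_le_comm.1 (hg u hu y hy)⟩
      (mem_image_of_mem g hu),
    le_csSup ⟨g u + ε, forall_mem_image.2 fun y hy => sub_le_iff_le_add'.1 (hg y hy u hu)⟩
      (mem_image_of_mem g hu)⟩

end Oscillation

section Norm1

variable {n : ℕ}

lemma norm1_smul (t : ℝ) (x : Fin n → ℝ) : norm1 (t • x) = |t| * norm1 x := by
  simp [norm1, abs_mul, Finset.mul_sum]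

lemma measurable_norm1 : Measurable (norm1 (n := n)) :=
  (continuous_finsetSum _ fun i _ => (continuous_apply i).abs).measurable

variable {V W : Set (Fin n → ℝ)} {S : Set ℝ}

lemma mem_smul_iff_of_norm1_eq_one (hV : ∀ x ∈ V, norm1 x = 1) (hS : S ⊆ Ioi 0)
    {x : Fin n → ℝ} : x ∈ S • V ↔ norm1 x ∈ S ∧ (norm1 x)⁻¹ • x ∈ V := by
  constructor
  · rintro ⟨t, ht, u, hu, rfl⟩
    have ht0 : 0 < t := hS ht
    rw [norm1_smul, hV u hu, abs_of_pos ht0, mul_one, smul_smul, inv_mul_cancel₀ ht0.ne',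
      one_smul]
    exact ⟨ht, hu⟩
  · rintro ⟨hxS, hxV⟩
    exact ⟨norm1 x, hxS, _, hxV, smul_inv_smul₀ (hS hxS).ne' x⟩

lemma measurableSet_smul_of_norm1_eq_one (hV : ∀ x ∈ V, norm1 x = 1) (hVm : MeasurableSet V)
    (hS : S ⊆ Ioi 0) (hSm : MeasurableSet S) : MeasurableSet (S • V) := by
  have hcone : S • V = norm1 ⁻¹' S ∩ (fun x => (norm1 x)⁻¹ • x) ⁻¹' V := by
    ext x
    exact mem_smul_iff_of_norm1_eq_one hV hS
  rw [hcone]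
  exact (measurable_norm1 hSm).inter ((measurable_norm1.inv.smul measurable_id) hVm)

lemma disjoint_smul_of_norm1_eq_one (hV : ∀ x ∈ V, norm1 x = 1) (hW : ∀ x ∈ W, norm1 x = 1)
    (hS : S ⊆ Ioi 0) (hVW : Disjoint V W) : Disjoint (S • V) (S • W) :=
  disjoint_left.2 fun _ hxV hxW => disjoint_left.1 hVW
    ((mem_smul_iff_of_norm1_eq_one hV hS).1 hxV).2 ((mem_smul_iff_of_norm1_eq_one hW hS).1 hxW).2

lemma measure_smul_iUnion_of_norm1_eq_one {ι : Type*} [Countable ι] (μ : Measure (Fin n → ℝ))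
    {U : ι → Set (Fin n → ℝ)} (hUm : ∀ i, MeasurableSet (U i))
    (hU : ∀ i, ∀ x ∈ U i, norm1 x = 1) (hUdisj : Pairwise (Function.onFun Disjoint U))
    (hS : S ⊆ Ioi 0) (hSm : MeasurableSet S) :
    μ (S • ⋃ i, U i) = ∑' i, μ (S • U i) := by
  rw [smul_iUnion]
  exact measure_iUnion (fun i j hij => disjoint_smul_of_norm1_eq_one (hU i) (hU j) hS (hUdisj hij))
    fun i => measurableSet_smul_of_norm1_eq_one (hU i) (hUm i) hS hSm

end Norm1

def IsHomogeneousMeasure {E : Type*} [MeasurableSpace E] [SMul ℝ E] (μ : Measure E) (h : ℝ) :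
    Prop :=
  ∀ t : ℝ, 0 < t → ∀ A : Set E, MeasurableSet A → μ (t • A) = ENNReal.ofReal (t ^ h) * μ A

section Cone

variable {E : Type*} [AddCommGroup E] [Module ℝ E]

lemma smul_Ioc_zero_one_smul {t : ℝ} (ht : 0 < t) (U : Set E) :
    t • (Ioc (0 : ℝ) 1 • U) = Ioc 0 t • U := by
  rw [← smul_assoc, LinearOrderedField.smul_Ioc ht, mul_zero, mul_one]

lemma IsHomogeneousMeasure.measure_Ioc_smul [MeasurableSpace E] {μ : Measure E} {h : ℝ}
    (hμ : IsHomogeneousMeasure μ h) {U : Set E} (hU : MeasurableSet (Ioc (0 : ℝ) 1 • U))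
    {t : ℝ} (ht : 0 < t) :
    μ (Ioc 0 t • U) = ENNReal.ofReal (t ^ h) * μ (Ioc (0 : ℝ) 1 • U) := by
  rw [← smul_Ioc_zero_one_smul ht, hμ t ht _ hU]

variable (f : E →ₗ[ℝ] ℝ)

lemma sep_Ioi_smul_subset_Ioc_smul {W : Set E} {b : ℝ} (hb : 0 < b) (hW : ∀ u ∈ W, b ≤ f u)
    (L : ℝ) : {x ∈ Ioi (0 : ℝ) • W | f x ≤ L} ⊆ Ioc 0 (L / b) • W := by
  rintro _ ⟨⟨t, ht, u, hu, rfl⟩, hfx⟩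
  rw [map_smul, smul_eq_mul] at hfx
  refine ⟨t, ⟨ht, ?_⟩, u, hu, rfl⟩
  rw [le_div_iff₀ hb]
  nlinarith [hW u hu, mem_Ioi.1 ht]

lemma Ioc_smul_subset_sep_Ioi_smul {W : Set E} {b : ℝ} (hb : 0 < b) (hW : ∀ u ∈ W, f u ≤ b)
    (L : ℝ) : Ioc 0 (L / b) • W ⊆ {x ∈ Ioi (0 : ℝ) • W | f x ≤ L} := by
  rintro _ ⟨t, ⟨ht0, htL⟩, u, hu, rfl⟩
  refine ⟨⟨t, ht0, u, hu, rfl⟩, ?_⟩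
  rw [map_smul, smul_eq_mul]
  rw [le_div_iff₀ hb] at htL
  nlinarith [hW u hu]

lemma sep_Ioi_smul_eq_smul (V : Set E) {L : ℝ} (hL : 0 < L) :
    {x ∈ Ioi (0 : ℝ) • V | f x ≤ L} = L • {x ∈ Ioi (0 : ℝ) • V | f x ≤ 1} := by
  have hcone : L⁻¹ • (Ioi (0 : ℝ) • V) = Ioi (0 : ℝ) • V := by
    rw [← smul_assoc, LinearOrderedField.smul_Ioi (inv_pos.2 hL), mul_zero]
  ext x
  rw [mem_smul_set_iff_inv_smul_mem₀ hL.ne', mem_sep_iff, mem_sep_iff, map_smul, smul_eq_mul,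
    inv_mul_le_one₀ hL, ← smul_mem_smul_set_iff₀ (inv_ne_zero hL.ne') (Ioi (0 : ℝ) • V) x, hcone]

end Cone

section CellEstimate

variable {E : Type*} [AddCommGroup E] [Module ℝ E] [MeasurableSpace E] {μ : Measure E} {h : ℝ}
  {f : E →ₗ[ℝ] ℝ} {U : Set E} {L : ℝ}

lemma IsHomogeneousMeasure.measure_sep_Ioi_smul_ne_top (hμ : IsHomogeneousMeasure μ h)
    (hU : MeasurableSet (Ioc (0 : ℝ) 1 • U)) (hUfin : μ (Ioc (0 : ℝ) 1 • U) ≠ ⊤) {c : ℝ}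
    (hc : 0 < c) (hlow : ∀ u ∈ U, c ≤ f u) (hL : 0 < L) :
    μ {x ∈ Ioi (0 : ℝ) • U | f x ≤ L} ≠ ⊤ :=
  ne_top_of_le_ne_top (by rw [hμ.measure_Ioc_smul hU (div_pos hL hc)]; finiteness)
    (measure_mono (sep_Ioi_smul_subset_Ioc_smul f hc hlow L))

lemma IsHomogeneousMeasure.toReal_measure_sep_Ioi_smul_mem_Icc (hμ : IsHomogeneousMeasure μ h)
    (hU : MeasurableSet (Ioc (0 : ℝ) 1 • U)) (hUfin : μ (Ioc (0 : ℝ) 1 • U) ≠ ⊤) {m M : ℝ}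
    (hm : 0 < m) (hmM : m ≤ M) (hf : ∀ u ∈ U, f u ∈ Icc m M) (hL : 0 < L) :
    (μ {x ∈ Ioi (0 : ℝ) • U | f x ≤ L}).toReal ∈
      Icc ((L / M) ^ h * (μ (Ioc (0 : ℝ) 1 • U)).toReal)
        ((L / m) ^ h * (μ (Ioc (0 : ℝ) 1 • U)).toReal) := by
  have hscale : ∀ t : ℝ, 0 < t →
      (μ (Ioc 0 t • U)).toReal = t ^ h * (μ (Ioc (0 : ℝ) 1 • U)).toReal := fun t ht => by
    rw [hμ.measure_Ioc_smul hU ht, ENNReal.toReal_mul,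
      ENNReal.toReal_ofReal (Real.rpow_nonneg ht.le h)]
  rw [← hscale _ (div_pos hL (hm.trans_le hmM)), ← hscale _ (div_pos hL hm)]
  exact ⟨ENNReal.toReal_mono
      (hμ.measure_sep_Ioi_smul_ne_top hU hUfin hm (fun u hu => (hf u hu).1) hL)
      (measure_mono
        (Ioc_smul_subset_sep_Ioi_smul f (hm.trans_le hmM) (fun u hu => (hf u hu).2) L)),
    ENNReal.toReal_mono (by rw [hμ.measure_Ioc_smul hU (div_pos hL hm)]; finiteness)
      (measure_mono (sep_Ioi_smul_subset_Ioc_smul f hm (fun u hu => (hf u hu).1) L))⟩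

lemma IsHomogeneousMeasure.abs_sub_toReal_measure_sep_Ioi_smul_le
    (hμ : IsHomogeneousMeasure μ h) (hh : 0 ≤ h) (hU : MeasurableSet (Ioc (0 : ℝ) 1 • U))
    (hUfin : μ (Ioc (0 : ℝ) 1 • U) ≠ ⊤) (hUne : U.Nonempty) {c ε : ℝ} (hc : 0 < c)
    (hlow : ∀ u ∈ U, c ≤ f u) (hosc : ∀ x ∈ U, ∀ y ∈ U, f x - f y ≤ ε) {a : ℝ} (ha : 0 ≤ a)
    (hL : 0 < L) {count err : ℝ}
    (hcount : count ∈ Icc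
      (a * (μ (Ioc (0 : ℝ) 1 • U)).toReal * (L / sSup (f '' U)) ^ h - err)
      (a * (μ (Ioc (0 : ℝ) 1 • U)).toReal * (L / sInf (f '' U)) ^ h + err)) :
    |count - a * (μ {x ∈ Ioi (0 : ℝ) • U | f x ≤ L}).toReal| ≤
      a * (μ (Ioc (0 : ℝ) 1 • U)).toReal * (h * c ^ (-h - 1) * ε * L ^ h) + err := by
  set m := sInf (f '' U)
  set M := sSup (f '' U)
  have hf : ∀ u ∈ U, f u ∈ Icc m M := fun u hu => mem_Icc_csInf_image_csSup_image hosc hu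
  have hcm : c ≤ m := le_csInf (hUne.image f) (forall_mem_image.2 hlow)
  have hmM : m ≤ M := hUne.elim fun u hu => (hf u hu).1.trans (hf u hu).2
  have hMm : M ≤ m + ε := csSup_image_le_csInf_image_add hUne hosc
  have hm : 0 < m := hc.trans_le hcm
  have hvol := hμ.toReal_measure_sep_Ioi_smul_mem_Icc hU hUfin hm hmM hf hL
  have hgap : (L / m) ^ h - (L / M) ^ h ≤ h * c ^ (-h - 1) * ε * L ^ h :=
    calc (L / m) ^ h - (L / M) ^ h = (m ^ (-h) - M ^ (-h)) * L ^ h := by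
          rw [Real.div_rpow hL.le hm.le, Real.div_rpow hL.le (hm.trans_le hmM).le,
            Real.rpow_neg hm.le, Real.rpow_neg (hm.trans_le hmM).le]
          ring
      _ ≤ h * c ^ (-h - 1) * (M - m) * L ^ h := by
          gcongr
          exact rpow_neg_sub_rpow_neg_le hh hc hcm hmM
      _ ≤ h * c ^ (-h - 1) * ε * L ^ h := by
          gcongr
          linarith
  have hspread := mul_le_mul_of_nonneg_left hgap
    (mul_nonneg ha (μ (Ioc (0 : ℝ) 1 • U)).toReal_nonneg)
  have hvol_lo := mul_le_mul_of_nonneg_left hvol.1 ha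
  have hvol_hi := mul_le_mul_of_nonneg_left hvol.2 ha
  rw [abs_le]
  constructor <;> linarith [hcount.1, hcount.2]

end CellEstimate

section Partition

variable {n : ℕ} {μ : Measure (Fin n → ℝ)} {h : ℝ} {V : Set (Fin n → ℝ)}
  {f : (Fin n → ℝ) →ₗ[ℝ] ℝ} {N : ℕ} {U : Fin N → Set (Fin n → ℝ)} {L : ℝ}

lemma ncard_sep_eq_sum_of_partition {Γ : Set (Fin n → ℝ)} (g : (Fin n → ℝ) → ℝ)
    (hΓ : Γ ⊆ Ioi (0 : ℝ) • V) (hΓfin : {x ∈ Γ | g x ≤ L}.Finite) (hUV : V = ⋃ i, U i)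
    (hUsph : ∀ i, ∀ x ∈ U i, norm1 x = 1) (hUdisj : Pairwise (Function.onFun Disjoint U)) :
    ({x ∈ Γ | g x ≤ L}.ncard : ℝ) = ∑ i, ({x ∈ Γ ∩ Ioi (0 : ℝ) • U i | g x ≤ L}.ncard : ℝ) := by
  have hcells : {x ∈ Γ | g x ≤ L} = ⋃ i, {x ∈ Γ ∩ Ioi (0 : ℝ) • U i | g x ≤ L} := by
    rw [hUV, smul_iUnion] at hΓ
    ext x
    simp only [mem_iUnion, mem_sep_iff, mem_inter_iff]
    constructor
    · rintro ⟨hxΓ, hgx⟩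
      obtain ⟨i, hi⟩ := mem_iUnion.1 (hΓ hxΓ)
      exact ⟨i, ⟨hxΓ, hi⟩, hgx⟩
    · rintro ⟨i, ⟨hxΓ, -⟩, hgx⟩
      exact ⟨hxΓ, hgx⟩
  have hdisj : Pairwise (Function.onFun Disjoint
      fun i => {x ∈ Γ ∩ Ioi (0 : ℝ) • U i | g x ≤ L}) := fun i j hij =>
    (disjoint_smul_of_norm1_eq_one (hUsph i) (hUsph j) (fun _ h => h) (hUdisj hij)).mono
      (fun _ hx => hx.1.2) (fun _ hx => hx.1.2)
  rw [hcells, ncard_iUnion_of_finite (fun i => hΓfin.subset fun _ hx => ⟨hx.1.1, hx.2⟩) hdisj,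
    finsum_eq_sum_of_fintype, Nat.cast_sum]

lemma IsHomogeneousMeasure.toReal_measure_sep_Ioi_smul_mul_rpow_eq_sum
    (hμ : IsHomogeneousMeasure μ h) (hUm : ∀ i, MeasurableSet (U i))
    (hUsph : ∀ i, ∀ x ∈ U i, norm1 x = 1) (hUdisj : Pairwise (Function.onFun Disjoint U))
    (hfin : ∀ i, μ {x ∈ Ioi (0 : ℝ) • U i | f x ≤ L} ≠ ⊤) (hL : 0 < L) :
    (μ {x ∈ Ioi (0 : ℝ) • ⋃ i, U i | f x ≤ 1}).toReal * L ^ h =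
      ∑ i, (μ {x ∈ Ioi (0 : ℝ) • U i | f x ≤ L}).toReal := by
  have hsublevel : ∀ t, MeasurableSet {x | f x ≤ t} := fun t =>
    measurableSet_le f.continuous_of_finiteDimensional.measurable measurable_const
  have hcone : MeasurableSet (Ioi (0 : ℝ) • ⋃ i, U i) :=
    measurableSet_smul_of_norm1_eq_one (fun x hx => (mem_iUnion.1 hx).elim fun i => hUsph i x)
      (MeasurableSet.iUnion hUm) (fun _ h => h) measurableSet_Ioi
  have hcells := measure_smul_iUnion_of_norm1_eq_one (μ.restrict {x | f x ≤ L}) hUm hUsph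
    hUdisj (fun _ h => h) measurableSet_Ioi
  simp only [Measure.restrict_apply' (hsublevel L), tsum_fintype] at hcells
  rw [← ENNReal.toReal_sum fun i _ => hfin i, mul_comm,
    ← ENNReal.toReal_ofReal (Real.rpow_nonneg hL.le h), ← ENNReal.toReal_mul,
    ← hμ L hL {x ∈ Ioi (0 : ℝ) • ⋃ i, U i | f x ≤ 1} (hcone.inter (hsublevel 1)),
    ← sep_Ioi_smul_eq_smul f _ hL]
  exact congrArg ENNReal.toReal hcells

lemma IsHomogeneousMeasure.abs_ncard_sub_le_of_partition (hμ : IsHomogeneousMeasure μ h)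
    (hh : 0 ≤ h) (hVsph : ∀ x ∈ V, norm1 x = 1) (hVfin : μ (Ioc (0 : ℝ) 1 • V) < ⊤) {c : ℝ}
    (hc : 0 < c) (hlow : ∀ u ∈ V, c ≤ f u) {Γ : Set (Fin n → ℝ)} (hΓ : Γ ⊆ Ioi (0 : ℝ) • V)
    (hΓfin : {x ∈ Γ | f x ≤ L}.Finite) (hUm : ∀ i, MeasurableSet (U i))
    (hUne : ∀ i, (U i).Nonempty) (hUV : V = ⋃ i, U i)
    (hUdisj : Pairwise (Function.onFun Disjoint U)) {ε : ℝ}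
    (hosc : ∀ i, ∀ x ∈ U i, ∀ y ∈ U i, f x - f y ≤ ε) {a : ℝ} (ha : 0 ≤ a) (hL : 0 < L)
    {err : ℝ} (hcount : ∀ i, ({x ∈ Γ ∩ Ioi (0 : ℝ) • U i | f x ≤ L}.ncard : ℝ) ∈ Icc
      (a * (μ (Ioc (0 : ℝ) 1 • U i)).toReal * (L / sSup (f '' U i)) ^ h - err)
      (a * (μ (Ioc (0 : ℝ) 1 • U i)).toReal * (L / sInf (f '' U i)) ^ h + err)) :
    |({x ∈ Γ | f x ≤ L}.ncard : ℝ) - a * (μ {x ∈ Ioi (0 : ℝ) • V | f x ≤ 1}).toReal * L ^ h| ≤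
      a * (μ (Ioc (0 : ℝ) 1 • V)).toReal * (h * c ^ (-h - 1) * ε * L ^ h) + N * err := by
  have hUsub : ∀ i, U i ⊆ V := fun i => hUV ▸ subset_iUnion U i
  have hUsph : ∀ i, ∀ x ∈ U i, norm1 x = 1 := fun i x hx => hVsph x (hUsub i hx)
  have hIoc : ∀ i, MeasurableSet (Ioc (0 : ℝ) 1 • U i) := fun i =>
    measurableSet_smul_of_norm1_eq_one (hUsph i) (hUm i) (fun _ h => h.1) measurableSet_Ioc
  have hUfin : ∀ i, μ (Ioc (0 : ℝ) 1 • U i) ≠ ⊤ := fun i =>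
    ne_top_of_le_ne_top hVfin.ne (measure_mono (smul_subset_smul_left (hUsub i)))
  have hfin : ∀ i, μ {x ∈ Ioi (0 : ℝ) • U i | f x ≤ L} ≠ ⊤ := fun i =>
    hμ.measure_sep_Ioi_smul_ne_top (hIoc i) (hUfin i) hc (fun u hu => hlow u (hUsub i hu)) hL
  have hvol := hμ.toReal_measure_sep_Ioi_smul_mul_rpow_eq_sum hUm hUsph hUdisj hfin hL
  rw [← hUV] at hvol
  have hμV : (μ (Ioc (0 : ℝ) 1 • V)).toReal = ∑ i, (μ (Ioc (0 : ℝ) 1 • U i)).toReal := by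
    rw [hUV, measure_smul_iUnion_of_norm1_eq_one μ hUm hUsph hUdisj (fun _ h => h.1)
      measurableSet_Ioc, tsum_fintype, ENNReal.toReal_sum fun i _ => hUfin i]
  rw [ncard_sep_eq_sum_of_partition f hΓ hΓfin hUV hUsph hUdisj, mul_assoc, hvol, hμV,
    Finset.mul_sum, ← Finset.sum_sub_distrib]
  calc _ ≤ ∑ i, |({x ∈ Γ ∩ Ioi (0 : ℝ) • U i | f x ≤ L}.ncard : ℝ)
          - a * (μ {x ∈ Ioi (0 : ℝ) • U i | f x ≤ L}).toReal| :=
        Finset.abs_sum_le_sum_abs _ _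
    _ ≤ ∑ i, (a * (μ (Ioc (0 : ℝ) 1 • U i)).toReal * (h * c ^ (-h - 1) * ε * L ^ h) + err) :=
        Finset.sum_le_sum fun i _ => hμ.abs_sub_toReal_measure_sep_Ioi_smul_le hh (hIoc i)
          (hUfin i) (hUne i) hc (fun u hu => hlow u (hUsub i hu)) (hosc i) ha hL (hcount i)
    _ = _ := by
        simp only [Finset.sum_add_distrib, Finset.sum_const, Finset.card_univ, Fintype.card_fin,
          nsmul_eq_mul, ← Finset.sum_mul, Finset.mul_sum]

end Partition

theorem abstract_effective_count_general
    (n : ℕ) (h κ : ℝ) (hh : 1 ≤ h) (hκ : 0 < κ)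
    (μ : Measure (Fin n → ℝ))
    (hhom : ∀ t : ℝ, 0 < t → ∀ A : Set (Fin n → ℝ), MeasurableSet A →
      μ (t • A) = ENNReal.ofReal (t ^ h) * μ A)
    (V : Set (Fin n → ℝ))
    (hVsph : ∀ x ∈ V, norm1 x = 1)
    (hVfin : μ (Set.Ioc (0:ℝ) 1 • V) < ⊤)
    (f : (Fin n → ℝ) →ₗ[ℝ] ℝ) (K c : ℝ) (hK : 0 ≤ K) (hc : 0 < c)
    (hlip : ∀ x y : Fin n → ℝ, |f x - f y| ≤ K * norm1 (x - y))
    (hlow : ∀ u ∈ V, c ≤ f u)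
    (Γ : Set (Fin n → ℝ)) (hΓ : Γ ⊆ Set.Ioi (0:ℝ) • V)
    (hΓfin : ∀ L : ℝ, {x ∈ Γ | f x ≤ L}.Finite)
    (a C₀ C₁ : ℝ) (ha : 0 ≤ a) (hC₀ : 0 < C₀) (hC₁ : 0 ≤ C₁)
    (hpart : ∀ δ ∈ Set.Ioc (0:ℝ) 1, ∃ (N : ℕ) (U : Fin N → Set (Fin n → ℝ)),
      (∀ i, MeasurableSet (U i)) ∧
      (∀ i, (U i).Nonempty) ∧
      V = ⋃ i, U i ∧
      Pairwise (Function.onFun Disjoint U) ∧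
      (N : ℝ) ≤ C₀ * δ ^ (-h) ∧
      (∀ i, ∀ x ∈ U i, ∀ y ∈ U i, norm1 (x - y) ≤ δ) ∧
      (∀ i, ∀ L : ℝ, 1 ≤ L →
        a * (μ (Set.Ioc (0:ℝ) 1 • U i)).toReal * (L / sSup (f '' U i)) ^ h
            - C₁ * L ^ (h - κ) ≤
          ({x ∈ Γ ∩ Set.Ioi (0:ℝ) • U i | f x ≤ L}.ncard : ℝ) ∧
        ({x ∈ Γ ∩ Set.Ioi (0:ℝ) • U i | f x ≤ L}.ncard : ℝ) ≤
          a * (μ (Set.Ioc (0:ℝ) 1 • U i)).toReal * (L / sInf (f '' U i)) ^ h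
            + C₁ * L ^ (h - κ))) :
    ∃ C₂ : ℝ, 0 ≤ C₂ ∧ ∀ L : ℝ, 1 ≤ L →
      |({x ∈ Γ | f x ≤ L}.ncard : ℝ) -
          a * (μ {x ∈ Set.Ioi (0:ℝ) • V | f x ≤ 1}).toReal * L ^ h| ≤
        C₂ * L ^ (h - κ / (h + 1)) := by
  refine ⟨a * (μ (Ioc (0 : ℝ) 1 • V)).toReal * (h * c ^ (-h - 1) * K) + C₀ * C₁,
    by positivity, fun L hL => ?_⟩
  have hL0 : 0 < L := one_pos.trans_le hL
  set δ := L ^ (-(κ / (h + 1)))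
  have hδ : δ ∈ Ioc (0 : ℝ) 1 :=
    ⟨by positivity, Real.rpow_le_one_of_one_le_of_nonpos hL (neg_nonpos.2 (by positivity))⟩
  have hδL : δ * L ^ h = L ^ (h - κ / (h + 1)) := by
    rw [← Real.rpow_add hL0]; congr 1; ring
  have hδκ : δ ^ (-h) * L ^ (h - κ) = L ^ (h - κ / (h + 1)) := by
    rw [← Real.rpow_mul hL0.le, ← Real.rpow_add hL0]; congr 1; field_simp; ring
  obtain ⟨N, U, hUm, hUne, hUV, hUdisj, hN, hUdiam, hUest⟩ := hpart δ hδ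
  have hosc : ∀ i, ∀ x ∈ U i, ∀ y ∈ U i, f x - f y ≤ K * δ := fun i x hx y hy =>
    (le_abs_self _).trans ((hlip x y).trans (mul_le_mul_of_nonneg_left (hUdiam i x hx y hy) hK))
  have hμ : IsHomogeneousMeasure μ h := hhom
  calc _ ≤ a * (μ (Ioc (0 : ℝ) 1 • V)).toReal * (h * c ^ (-h - 1) * (K * δ) * L ^ h)
          + N * (C₁ * L ^ (h - κ)) :=
        hμ.abs_ncard_sub_le_of_partition (by linarith) hVsph hVfin hc hlow hΓ (hΓfin L) hUm hUne
          hUV hUdisj hosc ha hL0 fun i => hUest i L hL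
    _ ≤ a * (μ (Ioc (0 : ℝ) 1 • V)).toReal * (h * c ^ (-h - 1) * K) * (δ * L ^ h)
          + C₀ * C₁ * (δ ^ (-h) * L ^ (h - κ)) := by
        have := mul_le_mul_of_nonneg_right hN (mul_nonneg hC₁ (Real.rpow_nonneg hL0.le (h - κ)))
        linarith
    _ = _ := by rw [hδL, hδκ]; ring

/-- Abstract effective counting (Proposition 3.7): suppose `μ` is a degree-`h` homogeneous
Borel measure on `ℝ^n` (`h ≥ 1`), `V` is a Borel subset of the unit `L¹` sphere with
`μ((0,1]·V) < ∞`, `f` is a linear functional, `K`-Lipschitz for `‖·‖₁` and `≥ c > 0` on `V`,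
and `Γ ⊆ (0,∞)·V` has finite sublevel sets for `f`. If for every `δ ∈ (0,1]` there is a
Borel partition of `V` into `N ≤ C₀·δ⁻ʰ` cells of `L¹`-diameter `≤ δ` on each of which the
two-sided per-cell counting estimate holds with error `C₁·L^(h−κ)`, then with
`v := μ {x ∈ (0,∞)·V | f x ≤ 1}` and `κ' := κ/(h+1)` there is `C₂ ≥ 0` with
`|#{x ∈ Γ | f x ≤ L} − a·v·Lʰ| ≤ C₂·L^(h−κ')` for all `L ≥ 1`. -/
theorem abstract_effective_count
    (n : ℕ) (hn : 0 < n) (h κ : ℝ) (hh : 1 ≤ h) (hκ : 0 < κ)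
    (μ : Measure (Fin n → ℝ))
    (hhom : ∀ t : ℝ, 0 < t → ∀ A : Set (Fin n → ℝ), MeasurableSet A →
      μ (t • A) = ENNReal.ofReal (t ^ h) * μ A)
    (V : Set (Fin n → ℝ)) (hVmeas : MeasurableSet V)
    (hVsph : ∀ x ∈ V, norm1 x = 1)
    (hVfin : μ (Set.Ioc (0:ℝ) 1 • V) < ⊤)
    (f : (Fin n → ℝ) →ₗ[ℝ] ℝ) (K c : ℝ) (hK : 0 ≤ K) (hc : 0 < c)
    (hlip : ∀ x y : Fin n → ℝ, |f x - f y| ≤ K * norm1 (x - y))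
    (hlow : ∀ u ∈ V, c ≤ f u)
    (Γ : Set (Fin n → ℝ)) (hΓ : Γ ⊆ Set.Ioi (0:ℝ) • V)
    (hΓfin : ∀ L : ℝ, {x ∈ Γ | f x ≤ L}.Finite)
    (a C₀ C₁ : ℝ) (ha : 0 ≤ a) (hC₀ : 0 < C₀) (hC₁ : 0 ≤ C₁)
    (hpart : ∀ δ ∈ Set.Ioc (0:ℝ) 1, ∃ (N : ℕ) (U : Fin N → Set (Fin n → ℝ)),
      (∀ i, MeasurableSet (U i)) ∧
      (∀ i, (U i).Nonempty) ∧
      V = ⋃ i, U i ∧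
      Pairwise (Function.onFun Disjoint U) ∧
      (N : ℝ) ≤ C₀ * δ ^ (-h) ∧
      (∀ i, ∀ x ∈ U i, ∀ y ∈ U i, norm1 (x - y) ≤ δ) ∧
      (∀ i, ∀ L : ℝ, 1 ≤ L →
        a * (μ (Set.Ioc (0:ℝ) 1 • U i)).toReal * (L / sSup (f '' U i)) ^ h
            - C₁ * L ^ (h - κ) ≤
          ({x ∈ Γ ∩ Set.Ioi (0:ℝ) • U i | f x ≤ L}.ncard : ℝ) ∧
        ({x ∈ Γ ∩ Set.Ioi (0:ℝ) • U i | f x ≤ L}.ncard : ℝ) ≤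
          a * (μ (Set.Ioc (0:ℝ) 1 • U i)).toReal * (L / sInf (f '' U i)) ^ h
            + C₁ * L ^ (h - κ))) :
    ∃ C₂ : ℝ, 0 ≤ C₂ ∧ ∀ L : ℝ, 1 ≤ L →
      |({x ∈ Γ | f x ≤ L}.ncard : ℝ) -
          a * (μ {x ∈ Set.Ioi (0:ℝ) • V | f x ≤ 1}).toReal * L ^ h| ≤
        C₂ * L ^ (h - κ / (h + 1)) :=
  abstract_effective_count_general n h κ hh hκ μ hhom V hVsph hVfin f K c hK hc hlip hlow Γ hΓ hΓfin
    a C₀ C₁ ha hC₀ hC₁ hpart
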